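/- Let n ≥ 1, m ≤ n, k ∈ ℕ, and let 𝒮 be a finite multiset of subsets of [n]. For a multiset 𝒯 of subsets of [n], define HCV(n, m, 𝒯) as the number of size-k sub-multisets {S_1, …, S_k} of 𝒯 with S_1 ∪ ⋯ ∪ S_k = [n] and each element of [m] belonging to exactly one S_i. If m < n, let 𝒮₁ = {S \ {n} : S ∈ 𝒮} and 𝒮₂ = {S ∈ 𝒮 : n ∉ S} (as multisets, viewing the sets as subsets of [n−1]). Then HCV(n, m, 𝒮) = HCV(n−1, m, 𝒮₁) − HCV(n−1, m, 𝒮₂). -/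
import Mathlib

open scoped Classical


lemma countP_ext {α : Type*} {p q : α → Prop} {i1 : DecidablePred p} {i2 : DecidablePred q}
    {s : Multiset α} (h : ∀ x ∈ s, p x ↔ q x) :
    @Multiset.countP α p i1 s = @Multiset.countP α q i2 s :=
  @Multiset.countP_congr α s s rfl p q i1 i2 (fun x hx => propext (h x hx))

lemma filter_ext {α : Type*} {p q : α → Prop} {i1 : DecidablePred p} {i2 : DecidablePred q}
    {s : Multiset α} (h : ∀ x ∈ s, p x ↔ q x) :
    @Multiset.filter α p i1 s = @Multiset.filter α q i2 s :=
  @Multiset.filter_congr α p q i1 i2 s h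

lemma countP_powerset_map_cl {α β : Type*} (f : α → β) (P : Multiset β → Prop) (s : Multiset α) :
    Multiset.countP P ((s.map f).powerset) =
      Multiset.countP (fun C => P (C.map f)) s.powerset := by
  induction s using Multiset.induction generalizing P with
  | empty =>
    rw [Multiset.map_zero]
    exact Multiset.countP_congr rfl fun C _ => rfl
  | cons a s ih =>
    rw [Multiset.map_cons, Multiset.powerset_cons, Multiset.powerset_cons,
      Multiset.countP_add, Multiset.countP_add, Multiset.countP_map, Multiset.countP_map,
      ← Multiset.countP_eq_card_filter, ← Multiset.countP_eq_card_filter, ih, ih]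
    congr 1
    exact Multiset.countP_congr rfl (by intro C _; simp)

lemma countP_powerset_map {α β : Type*} (f : α → β) (P : Multiset β → Prop)
    [DecidablePred P] (s : Multiset α) :
    Multiset.countP P ((s.map f).powerset) =
      Multiset.countP (fun C => P (C.map f)) s.powerset :=
  (countP_ext fun _ _ => Iff.rfl).trans
    ((countP_powerset_map_cl f P s).trans (countP_ext fun _ _ => Iff.rfl))

lemma countP_powerset_filter_cl {α : Type*} (q : α → Prop) (P : Multiset α → Prop) (s : Multiset α) :
    Multiset.countP P ((s.filter q).powerset) =
      Multiset.countP (fun C => P C ∧ ∀ a ∈ C, q a) s.powerset := by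
  induction s using Multiset.induction generalizing P with
  | empty =>
    rw [Multiset.filter_zero]
    refine Multiset.countP_congr rfl fun C hC => ?_
    rw [Multiset.powerset_zero, Multiset.mem_singleton] at hC
    subst hC
    simp only [eq_iff_iff]
    exact ⟨fun h => ⟨h, fun a ha => absurd ha (Multiset.notMem_zero a)⟩, fun h => h.1⟩
  | cons a s ih =>
    by_cases hq : q a
    · rw [Multiset.filter_cons_of_pos _ hq, Multiset.powerset_cons, Multiset.powerset_cons,
        Multiset.countP_add, Multiset.countP_add, Multiset.countP_map, Multiset.countP_map,
        ← Multiset.countP_eq_card_filter, ← Multiset.countP_eq_card_filter, ih, ih]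
      congr 1
      refine Multiset.countP_congr rfl ?_
      intro C _
      simp only [Multiset.mem_cons, eq_iff_iff]
      constructor
      · rintro ⟨h1, h2⟩; exact ⟨h1, fun b hb => hb.elim (fun e => e ▸ hq) (h2 b)⟩
      · rintro ⟨h1, h2⟩; exact ⟨h1, fun b hb => h2 b (Or.inr hb)⟩
    · rw [Multiset.filter_cons_of_neg _ hq, Multiset.powerset_cons,
        Multiset.countP_add, Multiset.countP_map,
        ← Multiset.countP_eq_card_filter, ih]
      have h0 : Multiset.countP (fun C => P (a ::ₘ C) ∧ ∀ b ∈ a ::ₘ C, q b) s.powerset = 0 := by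
        apply Multiset.countP_eq_zero.2
        intro C _
        rintro ⟨-, h⟩
        exact hq (h a (Multiset.mem_cons_self a C))
      rw [h0, add_zero]

lemma countP_powerset_filter {α : Type*} (q : α → Prop) (P : Multiset α → Prop)
    [DecidablePred q] [DecidablePred P] (s : Multiset α) :
    Multiset.countP P ((s.filter q).powerset) =
      Multiset.countP (fun C => P C ∧ ∀ a ∈ C, q a) s.powerset := by
  have h1 : Multiset.filter q s =
      @Multiset.filter α q (fun a => Classical.propDecidable (q a)) s :=
    filter_ext fun x _ => Iff.rfl
  rw [h1]
  exact (countP_ext fun _ _ => Iff.rfl).trans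
    ((countP_powerset_filter_cl q P s).trans (countP_ext fun _ _ => Iff.rfl))

lemma countP_split_cl {α : Type*} (p q : α → Prop) (s : Multiset α) :
    Multiset.countP p s =
      Multiset.countP (fun a => p a ∧ q a) s + Multiset.countP (fun a => p a ∧ ¬ q a) s := by
  rw [Multiset.countP_eq_card_filter p, ← Multiset.filter_add_not q (Multiset.filter p s),
    Multiset.card_add, ← Multiset.countP_eq_card_filter, ← Multiset.countP_eq_card_filter,
    Multiset.countP_filter, Multiset.countP_filter]
  congr 1
  · exact Multiset.countP_congr rfl fun a _ => propext and_comm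
  · exact Multiset.countP_congr rfl fun a _ => propext and_comm

lemma countP_split {α : Type*} (p q : α → Prop) {ip : DecidablePred p} (s : Multiset α) :
    @Multiset.countP α p ip s =
      Multiset.countP (fun a => p a ∧ q a) s + Multiset.countP (fun a => p a ∧ ¬ q a) s :=
  (countP_ext fun _ _ => Iff.rfl).trans ((countP_split_cl p q s).trans
    (congrArg₂ (· + ·) (countP_ext fun _ _ => Iff.rfl) (countP_ext fun _ _ => Iff.rfl)))

open scoped Classical in
/-- `HCV n m k 𝒯` counts size-`k` sub-multisets of `𝒯` whose union is `{1,…,n}` and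
such that every element of `{1,…,m}` belongs to exactly one member. -/
noncomputable def HCV (n m k : ℕ) (𝒯 : Multiset (Finset ℕ)) : ℕ :=
  Multiset.card (𝒯.powerset.filter (fun C =>
    Multiset.card C = k ∧
    (∀ x ∈ Finset.Icc 1 n, ∃ S ∈ C, x ∈ S) ∧
    (∀ x ∈ Finset.Icc 1 m, Multiset.countP (fun S => x ∈ S) C = 1)))

theorem stmt_8 (n m k : ℕ) (hn : 1 ≤ n) (hm : m < n)
    (𝒮 : Multiset (Finset ℕ)) (hsub : ∀ S ∈ 𝒮, S ⊆ Finset.Icc 1 n) :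
    (HCV n m k 𝒮 : ℤ) =
      HCV (n - 1) m k (𝒮.map (fun S => S.erase n)) -
      HCV (n - 1) m k (𝒮.filter (fun S => n ∉ S)) := by
  have hxmem : ∀ (x : ℕ), x ≠ n → ∀ S : Finset ℕ, (x ∈ S.erase n ↔ x ∈ S) := by
    intro x hx S; simp [Finset.mem_erase, hx]
  -- pointwise: the conditions on `C.map erase` are equivalent to the conditions on `C`
  have hA : ∀ C : Multiset (Finset ℕ),
      (Multiset.card (Multiset.map (fun S => S.erase n) C) = k ∧
       (∀ x ∈ Finset.Icc 1 (n-1), ∃ S ∈ Multiset.map (fun S => S.erase n) C, x ∈ S) ∧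
       (∀ x ∈ Finset.Icc 1 m,
          Multiset.countP (fun S => x ∈ S) (Multiset.map (fun S => S.erase n) C) = 1))
      ↔ (Multiset.card C = k ∧
       (∀ x ∈ Finset.Icc 1 (n-1), ∃ S ∈ C, x ∈ S) ∧
       (∀ x ∈ Finset.Icc 1 m, Multiset.countP (fun S => x ∈ S) C = 1)) := by
    intro C
    simp only [Multiset.card_map]
    refine and_congr Iff.rfl (and_congr ?_ ?_)
    · refine forall₂_congr fun x hx => ?_
      have hxn : x ≠ n := by have := Finset.mem_Icc.1 hx; omega
      constructor
      · rintro ⟨S, hS, hxS⟩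
        obtain ⟨T, hT, rfl⟩ := Multiset.mem_map.1 hS
        exact ⟨T, hT, (hxmem x hxn T).1 hxS⟩
      · rintro ⟨S, hS, hxS⟩
        exact ⟨S.erase n, Multiset.mem_map_of_mem _ hS, (hxmem x hxn S).2 hxS⟩
    · refine forall₂_congr fun x hx => ?_
      have hxn : x ≠ n := by have := Finset.mem_Icc.1 hx; omega
      rw [Multiset.countP_map, ← Multiset.countP_eq_card_filter,
        Multiset.countP_congr rfl fun S _ => propext (hxmem x hxn S)]
  have key : HCV (n-1) m k (𝒮.map (fun S => S.erase n)) =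
      HCV n m k 𝒮 + HCV (n-1) m k (𝒮.filter (fun S => n ∉ S)) := by
    simp only [HCV, ← Multiset.countP_eq_card_filter]
    rw [countP_powerset_map, countP_powerset_filter,
      countP_split _ (fun C => ∃ S ∈ C, n ∈ S) 𝒮.powerset]
    congr 1
    · refine countP_ext fun C _ => ?_
      rw [hA C]
      constructor
      · rintro ⟨⟨h1, h2, h3⟩, hS⟩
        refine ⟨h1, fun x hx => ?_, h3⟩
        have hx' := Finset.mem_Icc.1 hx
        by_cases hxn : x = n
        · subst hxn; exact hS
        · exact h2 x (Finset.mem_Icc.2 (by omega))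
      · rintro ⟨h1, h2, h3⟩
        exact ⟨⟨h1, fun x hx => h2 x (by
          have := Finset.mem_Icc.1 hx; exact Finset.mem_Icc.2 (by omega)), h3⟩,
          h2 n (Finset.mem_Icc.2 ⟨hn, le_rfl⟩)⟩
    · refine countP_ext fun C _ => ?_
      rw [hA C]
      constructor
      · rintro ⟨h1, h2⟩
        exact ⟨h1, fun S hS hnS => h2 ⟨S, hS, hnS⟩⟩
      · rintro ⟨h1, h2⟩
        exact ⟨h1, fun ⟨S, hS, hnS⟩ => h2 S hS hnS⟩
  rw [key]
  push_cast
  ring
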